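/- Let A ∈ ℝ^{n×m}, n ≥ m, with SVD A = UΣVᵀ, target rank k, A_k the best rank-k truncation and Ā_k = A − A_k. Let Z ∈ ℝ^{n×p} be full column rank with p ≤ rank(A), Ω_k = U_kᵀZ full row rank, T_k = Ω̄_kΩ_k⁺, S_k = (I + T_kT_kᵀ)^{−1/2}T_k. Then ‖[I_n − π(Z)]A‖²_{2} − ‖[I_n − π(Z)]Ā_k‖²_{2} ≤ ‖[I_n − π(Z)]A_k‖²_{2} ≤ min{‖S_k‖²_2 ‖Σ_k‖²_2, ‖T_kΣ_k‖²_2}, and the same chain of inequalities holds with the Frobenius norm in place of the spectral norm (with ‖Σ_k‖₂ unchanged in the first term of the min). -/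

import Mathlib

open Matrix

noncomputable def specNorm {m n : ℕ} (M : Matrix (Fin m) (Fin n) ℝ) : ℝ :=
  ‖LinearMap.toContinuousLinearMap (Matrix.toEuclideanLin M)‖

noncomputable def froNorm {m n : ℕ} (M : Matrix (Fin m) (Fin n) ℝ) : ℝ :=
  Real.sqrt (∑ i, ∑ j, (M i j)^2)

noncomputable def proj {n p : ℕ} (Z : Matrix (Fin n) (Fin p) ℝ) : Matrix (Fin n) (Fin n) ℝ :=
  Z * (Zᵀ * Z)⁻¹ * Zᵀ

noncomputable def pinvRow {k p : ℕ} (Ω : Matrix (Fin k) (Fin p) ℝ) : Matrix (Fin p) (Fin k) ℝ :=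
  Ωᵀ * (Ω * Ωᵀ)⁻¹

lemma onePlusMulSelfT_psd {l k : ℕ} (T : Matrix (Fin l) (Fin k) ℝ) :
    ((1 : Matrix (Fin l) (Fin l) ℝ) + T * Tᵀ).PosSemidef := by
  have h2 : (T * Tᵀ).PosSemidef := by
    simpa [Matrix.conjTranspose_eq_transpose_of_trivial] using Matrix.posSemidef_self_mul_conjTranspose T
  exact Matrix.PosSemidef.one.add h2

open scoped ComplexOrder in
/-- The square root of a positive semidefinite matrix, as `Matrix.PosSemidef.sqrt` was defined
in Mathlib of December 2024 (removed since). -/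
noncomputable def Matrix.PosSemidef.sqrt {n : Type*} [Fintype n] [DecidableEq n] {𝕜 : Type*}
    [RCLike 𝕜] {A : Matrix n n 𝕜} (hA : A.PosSemidef) : Matrix n n 𝕜 :=
  hA.1.eigenvectorUnitary.1 * diagonal ((↑) ∘ Real.sqrt ∘ hA.1.eigenvalues) *
    (star hA.1.eigenvectorUnitary : Matrix n n 𝕜)

noncomputable def sineMat {l k : ℕ} (T : Matrix (Fin l) (Fin k) ℝ) : Matrix (Fin l) (Fin k) ℝ :=
  ((onePlusMulSelfT_psd T).sqrt)⁻¹ * T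

/-!
Put `W = Z Ω_k⁺`. Then `U_kᵀ W = I` and `Ū_kᵀ W = T_k`, so `range W ⊆ range Z` is a
`k`-dimensional subspace whose principal angles with `range U_k` have tangents `T_k`, and
`WᵀW = I + T_kᵀT_k`. Since `π(W) ≤ π(Z)`, the Gram matrix of `[I - π(Z)] A_k` is dominated by that
of `[I - π(W)] A_k`, which is `V_k Σ_k (I - (I + T_kᵀT_k)⁻¹) Σ_k V_kᵀ = V_k Σ_k S_kᵀS_k Σ_k V_kᵀ`,
and `S_kᵀS_k ≤ T_kᵀT_k`. Both norms are monotone in the Gram matrix and invariant under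
transposition, which gives the upper bounds. The lower bounds follow from
`A Aᵀ = A_k A_kᵀ + Ā_k Ā_kᵀ`.
-/

open scoped ComplexOrder in
lemma Matrix.PosSemidef.posSemidef_sqrt {n 𝕜 : Type*} [Fintype n] [DecidableEq n] [RCLike 𝕜]
    {A : Matrix n n 𝕜} (hA : A.PosSemidef) : hA.sqrt.PosSemidef := by
  unfold Matrix.PosSemidef.sqrt
  rw [star_eq_conjTranspose]
  refine PosSemidef.mul_mul_conjTranspose_same ?_ _
  rw [posSemidef_diagonal_iff]
  intro i
  simp [Real.sqrt_nonneg]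

open scoped ComplexOrder in
lemma Matrix.PosSemidef.sqrt_mul_self {n 𝕜 : Type*} [Fintype n] [DecidableEq n] [RCLike 𝕜]
    {A : Matrix n n 𝕜} (hA : A.PosSemidef) : hA.sqrt * hA.sqrt = A := by
  unfold Matrix.PosSemidef.sqrt
  conv_rhs => rw [hA.1.spectral_theorem, Unitary.conjStarAlgAut_apply]
  set U : Matrix n n 𝕜 := hA.1.eigenvectorUnitary.1
  have hU : (star hA.1.eigenvectorUnitary : Matrix n n 𝕜) * U = 1 := by simp [U]
  simp only [Matrix.mul_assoc]
  rw [← Matrix.mul_assoc _ U, hU, Matrix.one_mul, ← Matrix.mul_assoc (diagonal _),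
    diagonal_mul_diagonal]
  congr 3
  ext i
  simp [← RCLike.ofReal_mul, Real.mul_self_sqrt (hA.eigenvalues_nonneg i)]

section SpectralNorm

variable {a b c : ℕ}

lemma specNorm_nonneg (M : Matrix (Fin a) (Fin b) ℝ) : 0 ≤ specNorm M :=
  norm_nonneg _

lemma norm_toEuclideanLin_le (M : Matrix (Fin a) (Fin b) ℝ) (x : EuclideanSpace ℝ (Fin b)) :
    ‖toEuclideanLin M x‖ ≤ specNorm M * ‖x‖ :=
  (LinearMap.toContinuousLinearMap (toEuclideanLin M)).le_opNorm x

lemma specNorm_le_of_forall {M : Matrix (Fin a) (Fin b) ℝ} {C : ℝ} (hC : 0 ≤ C)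
    (h : ∀ x, ‖toEuclideanLin M x‖ ≤ C * ‖x‖) : specNorm M ≤ C :=
  ContinuousLinearMap.opNorm_le_bound _ hC h

lemma norm_toEuclideanLin_sq (M : Matrix (Fin a) (Fin b) ℝ) (x : EuclideanSpace ℝ (Fin b)) :
    ‖toEuclideanLin M x‖ ^ 2 = x.ofLp ⬝ᵥ (Mᵀ * M) *ᵥ x.ofLp := by
  rw [← real_inner_self_eq_norm_sq, EuclideanSpace.inner_eq_star_dotProduct, ofLp_toLpLin,
    star_trivial, toLin'_apply, ← mulVec_mulVec, dotProduct_mulVec x.ofLp, vecMul_transpose]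

lemma specNorm_mul_le (M : Matrix (Fin a) (Fin b) ℝ) (N : Matrix (Fin b) (Fin c) ℝ) :
    specNorm (M * N) ≤ specNorm M * specNorm N := by
  refine specNorm_le_of_forall (mul_nonneg (specNorm_nonneg M) (specNorm_nonneg N)) fun x ↦ ?_
  rw [toLpLin_mul_same, LinearMap.comp_apply, mul_assoc]
  exact (norm_toEuclideanLin_le M _).trans
    (mul_le_mul_of_nonneg_left (norm_toEuclideanLin_le N x) (specNorm_nonneg M))

lemma specNorm_transpose (M : Matrix (Fin a) (Fin b) ℝ) : specNorm Mᵀ = specNorm M := by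
  rw [specNorm, ← conjTranspose_eq_transpose_of_trivial, toEuclideanLin_conjTranspose_eq_adjoint,
    LinearMap.adjoint_toContinuousLinearMap]
  exact ContinuousLinearMap.adjoint.norm_map _

lemma specNorm_le_of_posSemidef_sub {M : Matrix (Fin a) (Fin c) ℝ} {N : Matrix (Fin b) (Fin c) ℝ}
    (h : (Nᵀ * N - Mᵀ * M).PosSemidef) : specNorm M ≤ specNorm N := by
  refine specNorm_le_of_forall (specNorm_nonneg N) fun x ↦ ?_
  have hsq : ‖toEuclideanLin M x‖ ^ 2 ≤ ‖toEuclideanLin N x‖ ^ 2 := by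
    have := h.dotProduct_mulVec_nonneg x.ofLp
    rw [star_trivial, sub_mulVec, dotProduct_sub, sub_nonneg] at this
    rwa [norm_toEuclideanLin_sq, norm_toEuclideanLin_sq]
  exact (pow_le_pow_iff_left₀ (norm_nonneg _) (norm_nonneg _) two_ne_zero).mp hsq
    |>.trans (norm_toEuclideanLin_le N x)

lemma specNorm_sq_le_add_of_mul_transpose {a₁ a₂ : ℕ} {M : Matrix (Fin c) (Fin a) ℝ}
    {M₁ : Matrix (Fin c) (Fin a₁) ℝ} {M₂ : Matrix (Fin c) (Fin a₂) ℝ}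
    (h : M * Mᵀ = M₁ * M₁ᵀ + M₂ * M₂ᵀ) :
    specNorm M ^ 2 ≤ specNorm M₁ ^ 2 + specNorm M₂ ^ 2 := by
  rw [← specNorm_transpose M, ← specNorm_transpose M₁, ← specNorm_transpose M₂]
  set s := specNorm M₁ᵀ ^ 2 + specNorm M₂ᵀ ^ 2
  suffices specNorm Mᵀ ≤ √s by
    simpa [Real.sq_sqrt (by positivity : 0 ≤ s)] using pow_le_pow_left₀ (specNorm_nonneg _) this 2
  refine specNorm_le_of_forall (Real.sqrt_nonneg s) fun x ↦ ?_
  have hx : ‖toEuclideanLin Mᵀ x‖ ^ 2 ≤ (√s * ‖x‖) ^ 2 := by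
    have h₁ := pow_le_pow_left₀ (norm_nonneg _) (norm_toEuclideanLin_le M₁ᵀ x) 2
    have h₂ := pow_le_pow_left₀ (norm_nonneg _) (norm_toEuclideanLin_le M₂ᵀ x) 2
    rw [norm_toEuclideanLin_sq] at h₁ h₂ ⊢
    rw [transpose_transpose] at h₁ h₂ ⊢
    rw [h, add_mulVec, dotProduct_add, mul_pow, Real.sq_sqrt (by positivity)]
    nlinarith
  exact (pow_le_pow_iff_left₀ (norm_nonneg _) (by positivity) two_ne_zero).mp hx

end SpectralNorm

section FrobeniusNorm

variable {a b c : ℕ}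

lemma froNorm_nonneg (M : Matrix (Fin a) (Fin b) ℝ) : 0 ≤ froNorm M :=
  Real.sqrt_nonneg _

lemma froNorm_sq (M : Matrix (Fin a) (Fin b) ℝ) : froNorm M ^ 2 = ∑ i, ∑ j, M i j ^ 2 :=
  Real.sq_sqrt (by positivity)

lemma froNorm_transpose (M : Matrix (Fin a) (Fin b) ℝ) : froNorm Mᵀ = froNorm M := by
  rw [froNorm, froNorm, Finset.sum_comm]
  rfl

lemma froNorm_sq_eq_trace (M : Matrix (Fin a) (Fin b) ℝ) : froNorm M ^ 2 = (Mᵀ * M).trace := by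
  rw [froNorm_sq, trace, Finset.sum_comm]
  simp [diag, mul_apply, pow_two]

lemma froNorm_le_of_posSemidef_sub {M : Matrix (Fin a) (Fin c) ℝ} {N : Matrix (Fin b) (Fin c) ℝ}
    (h : (Nᵀ * N - Mᵀ * M).PosSemidef) : froNorm M ≤ froNorm N := by
  have := h.trace_nonneg
  rw [trace_sub, sub_nonneg, ← froNorm_sq_eq_trace, ← froNorm_sq_eq_trace] at this
  exact (pow_le_pow_iff_left₀ (froNorm_nonneg _) (froNorm_nonneg _) two_ne_zero).mp this

lemma froNorm_sq_eq_add_of_mul_transpose {a₁ a₂ : ℕ} {M : Matrix (Fin c) (Fin a) ℝ}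
    {M₁ : Matrix (Fin c) (Fin a₁) ℝ} {M₂ : Matrix (Fin c) (Fin a₂) ℝ}
    (h : M * Mᵀ = M₁ * M₁ᵀ + M₂ * M₂ᵀ) :
    froNorm M ^ 2 = froNorm M₁ ^ 2 + froNorm M₂ ^ 2 := by
  simp only [← froNorm_transpose M, ← froNorm_transpose M₁, ← froNorm_transpose M₂,
    froNorm_sq_eq_trace, transpose_transpose, h, trace_add]

lemma froNorm_mul_le (M : Matrix (Fin a) (Fin b) ℝ) (N : Matrix (Fin b) (Fin c) ℝ) :
    froNorm (M * N) ≤ froNorm M * specNorm N := by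
  have hrow : ∀ i, ∑ j, (M * N) i j ^ 2 = ‖toEuclideanLin Nᵀ (WithLp.toLp 2 (M i))‖ ^ 2 := by
    intro i
    simp [EuclideanSpace.norm_sq_eq, mul_apply, mulVec, dotProduct, mul_comm]
  have hsq : froNorm (M * N) ^ 2 ≤ (froNorm M * specNorm N) ^ 2 := by
    rw [froNorm_sq, mul_pow, froNorm_sq, Finset.sum_mul]
    refine Finset.sum_le_sum fun i _ ↦ ?_
    rw [hrow, ← specNorm_transpose N]
    calc _ ≤ (specNorm Nᵀ * ‖WithLp.toLp 2 (M i)‖) ^ 2 :=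
          pow_le_pow_left₀ (norm_nonneg _) (norm_toEuclideanLin_le _ _) 2
      _ = _ := by simp [mul_pow, EuclideanSpace.norm_sq_eq, mul_comm]
  have hnonneg := mul_nonneg (froNorm_nonneg M) (specNorm_nonneg N)
  exact (pow_le_pow_iff_left₀ (froNorm_nonneg _) hnonneg two_ne_zero).mp hsq

end FrobeniusNorm

lemma posSemidef_of_transpose_eq_of_mul_self_eq {ι : Type*} [Fintype ι] {Q : Matrix ι ι ℝ}
    (hsymm : Qᵀ = Q) (hidem : Q * Q = Q) : Q.PosSemidef := by
  have := posSemidef_conjTranspose_mul_self Q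
  rwa [conjTranspose_eq_transpose_of_trivial, hsymm, hidem] at this

lemma posSemidef_gram_mul_sub_gram_mul {ι a b c : Type*} [Fintype ι] [Fintype a] [Fintype b]
    [Fintype c] {M : Matrix a ι ℝ} {N : Matrix b ι ℝ} (h : (Nᵀ * N - Mᵀ * M).PosSemidef)
    (X : Matrix ι c ℝ) : ((N * X)ᵀ * (N * X) - (M * X)ᵀ * (M * X)).PosSemidef := by
  have := h.conjTranspose_mul_mul_same X
  simpa only [conjTranspose_eq_transpose_of_trivial, transpose_mul, Matrix.mul_sub, Matrix.sub_mul,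
    Matrix.mul_assoc] using this

lemma mul_add_mul_transpose_eq_of_mul_transpose_eq_zero {ι κ μ : Type*} [Fintype κ] [Fintype μ]
    (P : Matrix ι κ ℝ) {A₁ A₂ : Matrix κ μ ℝ} (h : A₁ * A₂ᵀ = 0) :
    (P * (A₁ + A₂)) * (P * (A₁ + A₂))ᵀ = (P * A₁) * (P * A₁)ᵀ + (P * A₂) * (P * A₂)ᵀ := by
  have h' : A₂ * A₁ᵀ = 0 := by
    simpa only [transpose_mul, transpose_transpose, transpose_zero] using congrArg transpose h
  have hgram : ∀ X Y : Matrix κ μ ℝ, (P * X) * (P * Y)ᵀ = P * (X * Yᵀ) * Pᵀ := by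
    intro X Y
    simp only [transpose_mul, Matrix.mul_assoc]
  rw [Matrix.mul_add P, transpose_add, Matrix.add_mul, Matrix.mul_add, Matrix.mul_add]
  simp only [hgram, h, h', Matrix.mul_zero, Matrix.zero_mul, add_zero, zero_add]

lemma isUnit_det_of_rank_eq_card {ι K : Type*} [Fintype ι] [DecidableEq ι] [Field K]
    {M : Matrix ι ι K} (h : M.rank = Fintype.card ι) : IsUnit M.det := by
  have hrange : LinearMap.range M.mulVecLin = ⊤ := by
    apply Submodule.eq_top_of_finrank_eq
    rw [← rank, h, Module.finrank_fintype_fun_eq_card]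
  rw [← isUnit_iff_isUnit_det, ← mulVec_surjective_iff_isUnit]
  exact LinearMap.range_eq_top.mp hrange

lemma isUnit_det_transpose_mul_self_of_rank_eq {m n : Type*} [Fintype m] [Fintype n]
    [DecidableEq n] {M : Matrix m n ℝ} (h : M.rank = Fintype.card n) : IsUnit (Mᵀ * M).det :=
  isUnit_det_of_rank_eq_card (by rw [rank_transpose_mul_self, h])

lemma isUnit_det_mul_transpose_self_of_rank_eq {m n : Type*} [Fintype m] [Fintype n]
    [DecidableEq m] {M : Matrix m n ℝ} (h : M.rank = Fintype.card m) : IsUnit (M * Mᵀ).det := by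
  simpa only [transpose_transpose] using
    isUnit_det_transpose_mul_self_of_rank_eq (M := Mᵀ) (by rw [rank_transpose, h])

lemma isUnit_det_one_add_transpose_mul_self {m n : Type*} [Fintype m] [Fintype n] [DecidableEq n]
    (T : Matrix m n ℝ) : IsUnit (1 + Tᵀ * T).det := by
  have hT : (Tᵀ * T).PosSemidef := by
    simpa only [conjTranspose_eq_transpose_of_trivial] using posSemidef_conjTranspose_mul_self T
  exact (PosDef.one.add_posSemidef hT).det_pos.ne'.isUnit

section Projection

variable {n p q : ℕ}

lemma proj_transpose (Z : Matrix (Fin n) (Fin p) ℝ) : (proj Z)ᵀ = proj Z := by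
  rw [proj, transpose_mul, transpose_mul, transpose_transpose, transpose_nonsing_inv, transpose_mul,
    transpose_transpose, Matrix.mul_assoc]

lemma proj_mul_self {Z : Matrix (Fin n) (Fin p) ℝ} (hZ : IsUnit (Zᵀ * Z).det) : proj Z * Z = Z := by
  rw [proj, Matrix.mul_assoc, Matrix.mul_assoc, nonsing_inv_mul _ hZ, Matrix.mul_one]

lemma proj_mul_proj_of_proj_mul {Z : Matrix (Fin n) (Fin p) ℝ} {W : Matrix (Fin n) (Fin q) ℝ}
    (h : proj Z * W = W) : proj Z * proj W = proj W := by
  conv_lhs => rw [proj.eq_1 W, ← Matrix.mul_assoc, ← Matrix.mul_assoc, h]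
  rfl

lemma proj_mul_proj {Z : Matrix (Fin n) (Fin p) ℝ} (hZ : IsUnit (Zᵀ * Z).det) :
    proj Z * proj Z = proj Z :=
  proj_mul_proj_of_proj_mul (proj_mul_self hZ)

lemma proj_sub_proj_posSemidef {Z : Matrix (Fin n) (Fin p) ℝ} {W : Matrix (Fin n) (Fin q) ℝ}
    (hZ : IsUnit (Zᵀ * Z).det) (hW : IsUnit (Wᵀ * W).det) (h : proj Z * W = W) :
    (proj Z - proj W).PosSemidef := by
  have hZW := proj_mul_proj_of_proj_mul h
  have hWZ : proj W * proj Z = proj W := by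
    simpa only [transpose_mul, proj_transpose] using congrArg transpose hZW
  refine posSemidef_of_transpose_eq_of_mul_self_eq ?_ ?_
  · rw [transpose_sub, proj_transpose, proj_transpose]
  · rw [Matrix.sub_mul, Matrix.mul_sub, Matrix.mul_sub, proj_mul_proj hZ, hZW, hWZ,
      proj_mul_proj hW]
    abel

lemma gram_one_sub_proj_mul {Z : Matrix (Fin n) (Fin p) ℝ} (hZ : IsUnit (Zᵀ * Z).det)
    (M : Matrix (Fin n) (Fin q) ℝ) :
    ((1 - proj Z) * M)ᵀ * ((1 - proj Z) * M) = Mᵀ * (1 - proj Z) * M := by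
  have hidem : (1 - proj Z) * (1 - proj Z) = 1 - proj Z := by
    rw [Matrix.sub_mul, Matrix.mul_sub, Matrix.mul_sub, proj_mul_proj hZ]
    simp
  rw [transpose_mul, transpose_sub, transpose_one, proj_transpose, Matrix.mul_assoc,
    ← Matrix.mul_assoc (1 - proj Z), hidem, Matrix.mul_assoc]

end Projection

section InverseIdentities

variable {m n : Type*} [Fintype m] [Fintype n] [DecidableEq m] [DecidableEq n]

lemma inv_mul_eq_mul_inv_of_mul_eq {A : Matrix m m ℝ} {B : Matrix n n ℝ} {T : Matrix m n ℝ}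
    (hA : IsUnit A.det) (hB : IsUnit B.det) (h : A * T = T * B) : A⁻¹ * T = T * B⁻¹ := by
  calc A⁻¹ * T = A⁻¹ * (T * B) * B⁻¹ := by
        rw [Matrix.mul_assoc, Matrix.mul_assoc, mul_nonsing_inv _ hB, Matrix.mul_one]
    _ = T * B⁻¹ := by rw [← h, ← Matrix.mul_assoc, nonsing_inv_mul _ hA, Matrix.one_mul]

lemma one_sub_inv_one_add_eq_mul_inv {F : Matrix n n ℝ} (hF : IsUnit (1 + F).det) :
    1 - (1 + F)⁻¹ = F * (1 + F)⁻¹ := by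
  rw [sub_eq_iff_eq_add, ← add_one_mul, add_comm F, mul_nonsing_inv _ hF]

lemma one_sub_inv_one_add_eq_inv_mul {F : Matrix n n ℝ} (hF : IsUnit (1 + F).det) :
    1 - (1 + F)⁻¹ = (1 + F)⁻¹ * F := by
  rw [sub_eq_iff_eq_add, ← mul_add_one, add_comm F, nonsing_inv_mul _ hF]

end InverseIdentities

section SineMatrix

variable {l k : ℕ}

lemma sineMat_transpose_mul_self (T : Matrix (Fin l) (Fin k) ℝ) :
    (sineMat T)ᵀ * sineMat T = 1 - (1 + Tᵀ * T)⁻¹ := by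
  set R := (onePlusMulSelfT_psd T).sqrt
  have hR : Rᵀ = R := by
    simpa only [conjTranspose_eq_transpose_of_trivial] using
      (onePlusMulSelfT_psd T).posSemidef_sqrt.isHermitian.eq
  have hpush : (1 + T * Tᵀ)⁻¹ * T = T * (1 + Tᵀ * T)⁻¹ := by
    refine inv_mul_eq_mul_inv_of_mul_eq ?_ (isUnit_det_one_add_transpose_mul_self T) ?_
    · simpa only [transpose_transpose] using isUnit_det_one_add_transpose_mul_self Tᵀ
    · rw [Matrix.add_mul, Matrix.mul_add, Matrix.one_mul, Matrix.mul_one, Matrix.mul_assoc]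
  rw [sineMat, transpose_mul, transpose_nonsing_inv, hR, Matrix.mul_assoc, ← Matrix.mul_assoc R⁻¹,
    ← Matrix.mul_inv_rev, (onePlusMulSelfT_psd T).sqrt_mul_self, hpush, ← Matrix.mul_assoc,
    one_sub_inv_one_add_eq_mul_inv (isUnit_det_one_add_transpose_mul_self T)]

lemma posSemidef_transpose_mul_self_sub_sineMat (T : Matrix (Fin l) (Fin k) ℝ) :
    (Tᵀ * T - (sineMat T)ᵀ * sineMat T).PosSemidef := by
  set F := Tᵀ * T
  have hF : IsUnit (1 + F).det := isUnit_det_one_add_transpose_mul_self T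
  have hG : (1 + F)⁻¹.PosSemidef :=
    (PosDef.one.add_posSemidef (by simpa only [conjTranspose_eq_transpose_of_trivial]
      using posSemidef_conjTranspose_mul_self T)).inv.posSemidef
  have hFt : Fᴴ = F := by
    rw [conjTranspose_eq_transpose_of_trivial, transpose_mul, transpose_transpose]
  -- tan² - sin² = tan² cos² tan², written with `cos² = (1 + tan²)⁻¹`
  have hid : F - (1 - (1 + F)⁻¹) = Fᴴ * (1 + F)⁻¹ * F := by
    rw [hFt, Matrix.mul_assoc, ← one_sub_inv_one_add_eq_inv_mul hF, Matrix.mul_sub, Matrix.mul_one,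
      ← one_sub_inv_one_add_eq_mul_inv hF]
  rw [sineMat_transpose_mul_self, hid]
  exact hG.conjTranspose_mul_mul_same F

end SineMatrix

lemma mul_pinvRow {k p : ℕ} {Ω : Matrix (Fin k) (Fin p) ℝ} (hΩ : IsUnit (Ω * Ωᵀ).det) :
    Ω * pinvRow Ω = 1 := by
  rw [pinvRow, ← Matrix.mul_assoc, mul_nonsing_inv _ hΩ]

section Lift

variable {n k l p q : ℕ} {Uk : Matrix (Fin n) (Fin k) ℝ} {Ubar : Matrix (Fin n) (Fin l) ℝ}

lemma transpose_mul_self_eq_add_of_mul_transpose_add_eq_one (hU : Uk * Ukᵀ + Ubar * Ubarᵀ = 1)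
    (W : Matrix (Fin n) (Fin q) ℝ) :
    Wᵀ * W = (Ukᵀ * W)ᵀ * (Ukᵀ * W) + (Ubarᵀ * W)ᵀ * (Ubarᵀ * W) := by
  calc Wᵀ * W = Wᵀ * ((Uk * Ukᵀ + Ubar * Ubarᵀ) * W) := by rw [hU, Matrix.one_mul]
    _ = _ := by
      simp only [transpose_mul, transpose_transpose, Matrix.add_mul, Matrix.mul_add,
        Matrix.mul_assoc]

lemma transpose_mul_one_sub_proj_mul (hUk : Ukᵀ * Uk = 1) {W : Matrix (Fin n) (Fin k) ℝ}
    (hW : Ukᵀ * W = 1) : Ukᵀ * (1 - proj W) * Uk = 1 - (Wᵀ * W)⁻¹ := by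
  have hW' : Wᵀ * Uk = 1 := by
    simpa only [transpose_mul, transpose_one, transpose_transpose] using congrArg transpose hW
  rw [Matrix.mul_sub, Matrix.sub_mul, Matrix.mul_one, hUk, proj, ← Matrix.mul_assoc,
    ← Matrix.mul_assoc, hW, Matrix.one_mul, Matrix.mul_assoc, hW', Matrix.mul_one]

lemma posSemidef_gram_sineMat_sub_gram_one_sub_proj (hUk : Ukᵀ * Uk = 1)
    (hU : Uk * Ukᵀ + Ubar * Ubarᵀ = 1) {Z : Matrix (Fin n) (Fin p) ℝ} (hZ : IsUnit (Zᵀ * Z).det)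
    {W : Matrix (Fin n) (Fin k) ℝ} (hWZ : proj Z * W = W) (hW : Ukᵀ * W = 1)
    {T : Matrix (Fin l) (Fin k) ℝ} (hT : Ubarᵀ * W = T) (X : Matrix (Fin k) (Fin q) ℝ) :
    ((sineMat T * X)ᵀ * (sineMat T * X)
      - ((1 - proj Z) * (Uk * X))ᵀ * ((1 - proj Z) * (Uk * X))).PosSemidef := by
  have hWW : Wᵀ * W = 1 + Tᵀ * T := by
    rw [transpose_mul_self_eq_add_of_mul_transpose_add_eq_one hU, hW, hT, transpose_one,
      Matrix.one_mul]
  have hWu : IsUnit (Wᵀ * W).det := hWW ▸ isUnit_det_one_add_transpose_mul_self T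
  have hsin : (sineMat T * X)ᵀ * (sineMat T * X) = (Uk * X)ᵀ * (1 - proj W) * (Uk * X) := by
    rw [transpose_mul, transpose_mul, Matrix.mul_assoc, ← Matrix.mul_assoc _ (sineMat T),
      sineMat_transpose_mul_self, ← hWW, ← transpose_mul_one_sub_proj_mul hUk hW]
    simp only [Matrix.mul_assoc]
  rw [hsin, gram_one_sub_proj_mul hZ, ← Matrix.sub_mul, ← Matrix.mul_sub, sub_sub_sub_cancel_left]
  simpa only [conjTranspose_eq_transpose_of_trivial] using
    (proj_sub_proj_posSemidef hZ hWu hWZ).conjTranspose_mul_mul_same (Uk * X)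

end Lift

def IsGramMonotone (ν : ∀ {a b : ℕ}, Matrix (Fin a) (Fin b) ℝ → ℝ) : Prop :=
  ∀ ⦃a b c : ℕ⦄ ⦃M : Matrix (Fin a) (Fin c) ℝ⦄ ⦃N : Matrix (Fin b) (Fin c) ℝ⦄,
    (Nᵀ * N - Mᵀ * M).PosSemidef → ν M ≤ ν N

lemma specNorm_isGramMonotone : IsGramMonotone specNorm :=
  fun _ _ _ _ _ ↦ specNorm_le_of_posSemidef_sub

lemma froNorm_isGramMonotone : IsGramMonotone froNorm :=
  fun _ _ _ _ _ ↦ froNorm_le_of_posSemidef_sub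

namespace IsGramMonotone

variable {ν : ∀ {a b : ℕ}, Matrix (Fin a) (Fin b) ℝ → ℝ}

lemma eq_of_gram_eq (hν : IsGramMonotone ν) {a b c : ℕ} {M : Matrix (Fin a) (Fin c) ℝ}
    {N : Matrix (Fin b) (Fin c) ℝ} (h : Mᵀ * M = Nᵀ * N) : ν M = ν N :=
  le_antisymm (hν (by rw [h, sub_self]; exact .zero)) (hν (by rw [h, sub_self]; exact .zero))

lemma mul_transpose_of_orthonormal (hν : IsGramMonotone ν)
    (hνT : ∀ {a b : ℕ} (M : Matrix (Fin a) (Fin b) ℝ), ν Mᵀ = ν M) {a b c : ℕ}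
    {V : Matrix (Fin c) (Fin b) ℝ} (hV : Vᵀ * V = 1) (M : Matrix (Fin a) (Fin b) ℝ) :
    ν (M * Vᵀ) = ν M := by
  rw [← hνT (M * Vᵀ), ← hνT M, transpose_mul, transpose_transpose]
  refine hν.eq_of_gram_eq ?_
  rw [transpose_mul, transpose_transpose, Matrix.mul_assoc, ← Matrix.mul_assoc Vᵀ, hV,
    Matrix.one_mul]

lemma one_sub_proj_mul_le (hν : IsGramMonotone ν)
    (hνT : ∀ {a b : ℕ} (M : Matrix (Fin a) (Fin b) ℝ), ν Mᵀ = ν M)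
    {n m k l p : ℕ} {Uk : Matrix (Fin n) (Fin k) ℝ} {Ubar : Matrix (Fin n) (Fin l) ℝ}
    {Vk : Matrix (Fin m) (Fin k) ℝ} (hUk : Ukᵀ * Uk = 1) (hU : Uk * Ukᵀ + Ubar * Ubarᵀ = 1)
    (hVk : Vkᵀ * Vk = 1) {Z : Matrix (Fin n) (Fin p) ℝ} (hZ : IsUnit (Zᵀ * Z).det)
    {W : Matrix (Fin n) (Fin k) ℝ} (hWZ : proj Z * W = W) (hW : Ukᵀ * W = 1)
    {T : Matrix (Fin l) (Fin k) ℝ} (hT : Ubarᵀ * W = T) (D : Matrix (Fin k) (Fin k) ℝ) :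
    ν ((1 - proj Z) * (Uk * D * Vkᵀ)) ≤ ν (sineMat T * D) ∧
      ν ((1 - proj Z) * (Uk * D * Vkᵀ)) ≤ ν (T * D) := by
  have hsin := hν (posSemidef_gram_sineMat_sub_gram_one_sub_proj hUk hU hZ hWZ hW hT (D * Vkᵀ))
  have htan := hν (posSemidef_gram_mul_sub_gram_mul
    (posSemidef_transpose_mul_self_sub_sineMat T) (D * Vkᵀ))
  beta_reduce at hsin htan
  rw [← Matrix.mul_assoc Uk, ← Matrix.mul_assoc (sineMat T),
    hν.mul_transpose_of_orthonormal hνT hVk] at hsin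
  rw [← Matrix.mul_assoc (sineMat T), ← Matrix.mul_assoc T,
    hν.mul_transpose_of_orthonormal hνT hVk, hν.mul_transpose_of_orthonormal hνT hVk] at htan
  exact ⟨hsin, hsin.trans htan⟩

end IsGramMonotone

theorem deterministic_error_bounds_general {n m k p : ℕ}
    (A : Matrix (Fin n) (Fin m) ℝ)
    (Uk : Matrix (Fin n) (Fin k) ℝ) (Ubar : Matrix (Fin n) (Fin (n - k)) ℝ)
    (Vk : Matrix (Fin m) (Fin k) ℝ) (Vbar : Matrix (Fin m) (Fin (m - k)) ℝ)
    (σ : Fin k → ℝ) (Sigb : Matrix (Fin (n - k)) (Fin (m - k)) ℝ)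
    (hUk : Ukᵀ * Uk = 1) (hUfull : Uk * Ukᵀ + Ubar * Ubarᵀ = 1)
    (hVk : Vkᵀ * Vk = 1) (hVmix : Vkᵀ * Vbar = 0)
    (hA : A = Uk * Matrix.diagonal σ * Vkᵀ + Ubar * Sigb * Vbarᵀ)
    (Z : Matrix (Fin n) (Fin p) ℝ) (hZ : Z.rank = p)
    (hΩ : (Ukᵀ * Z).rank = k) :
    -- notation
    ∀ P Ak Ab T S,
      P = (1 : Matrix (Fin n) (Fin n) ℝ) - proj Z →
      Ak = Uk * Matrix.diagonal σ * Vkᵀ →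
      Ab = Ubar * Sigb * Vbarᵀ →
      T = (Ubarᵀ * Z) * pinvRow (Ukᵀ * Z) →
      S = sineMat T →
      (specNorm (P * A) ^ 2 - specNorm (P * Ab) ^ 2 ≤ specNorm (P * Ak) ^ 2 ∧
        specNorm (P * Ak) ^ 2 ≤
          min (specNorm S ^ 2 * specNorm (Matrix.diagonal σ) ^ 2)
            (specNorm (T * Matrix.diagonal σ) ^ 2)) ∧
      (froNorm (P * A) ^ 2 - froNorm (P * Ab) ^ 2 ≤ froNorm (P * Ak) ^ 2 ∧
        froNorm (P * Ak) ^ 2 ≤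
          min (froNorm S ^ 2 * specNorm (Matrix.diagonal σ) ^ 2)
            (froNorm (T * Matrix.diagonal σ) ^ 2)) := by
  rintro P Ak Ab T S rfl rfl rfl rfl rfl
  have hZu := isUnit_det_transpose_mul_self_of_rank_eq (hZ.trans (Fintype.card_fin p).symm)
  have hΩu := isUnit_det_mul_transpose_self_of_rank_eq (hΩ.trans (Fintype.card_fin k).symm)
  have hWZ : proj Z * (Z * pinvRow (Ukᵀ * Z)) = Z * pinvRow (Ukᵀ * Z) := by
    rw [← Matrix.mul_assoc, proj_mul_self hZu]
  have hW : Ukᵀ * (Z * pinvRow (Ukᵀ * Z)) = 1 := by rw [← Matrix.mul_assoc, mul_pinvRow hΩu]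
  obtain ⟨hs₁, hs₂⟩ := specNorm_isGramMonotone.one_sub_proj_mul_le specNorm_transpose hUk hUfull
    hVk hZu hWZ hW (Matrix.mul_assoc _ _ _).symm (diagonal σ)
  obtain ⟨hf₁, hf₂⟩ := froNorm_isGramMonotone.one_sub_proj_mul_le froNorm_transpose hUk hUfull
    hVk hZu hWZ hW (Matrix.mul_assoc _ _ _).symm (diagonal σ)
  have hcross : Uk * diagonal σ * Vkᵀ * (Ubar * Sigb * Vbarᵀ)ᵀ = 0 := by
    simp only [transpose_mul, transpose_transpose, Matrix.mul_assoc]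
    rw [← Matrix.mul_assoc Vkᵀ, hVmix, Matrix.zero_mul, Matrix.mul_zero, Matrix.mul_zero]
  have hsplit := hA ▸ mul_add_mul_transpose_eq_of_mul_transpose_eq_zero (1 - proj Z) hcross
  refine ⟨⟨?_, le_min ?_ ?_⟩, ⟨?_, le_min ?_ ?_⟩⟩
  · linarith [specNorm_sq_le_add_of_mul_transpose hsplit]
  · calc _ ≤ specNorm (sineMat _ * diagonal σ) ^ 2 := pow_le_pow_left₀ (specNorm_nonneg _) hs₁ 2
      _ ≤ _ := by rw [← mul_pow]; exact pow_le_pow_left₀ (specNorm_nonneg _) (specNorm_mul_le _ _) 2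
  · exact pow_le_pow_left₀ (specNorm_nonneg _) hs₂ 2
  · linarith [froNorm_sq_eq_add_of_mul_transpose hsplit]
  · calc _ ≤ froNorm (sineMat _ * diagonal σ) ^ 2 := pow_le_pow_left₀ (froNorm_nonneg _) hf₁ 2
      _ ≤ _ := by rw [← mul_pow]; exact pow_le_pow_left₀ (froNorm_nonneg _) (froNorm_mul_le _ _) 2
  · exact pow_le_pow_left₀ (froNorm_nonneg _) hf₂ 2

/-- Theorem 1 (deterministic error bounds in spectral and Frobenius norms). -/
theorem deterministic_error_bounds {n m k p : ℕ} (hnm : m ≤ n) (hkp : k ≤ p)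
    (A : Matrix (Fin n) (Fin m) ℝ)
    (Uk : Matrix (Fin n) (Fin k) ℝ) (Ubar : Matrix (Fin n) (Fin (n - k)) ℝ)
    (Vk : Matrix (Fin m) (Fin k) ℝ) (Vbar : Matrix (Fin m) (Fin (m - k)) ℝ)
    (σ : Fin k → ℝ) (Sigb : Matrix (Fin (n - k)) (Fin (m - k)) ℝ)
    (hσ0 : ∀ i, 0 ≤ σ i) (hσmono : ∀ i j : Fin k, i ≤ j → σ j ≤ σ i)
    (hUk : Ukᵀ * Uk = 1) (hUbar : Ubarᵀ * Ubar = 1) (hUfull : Uk * Ukᵀ + Ubar * Ubarᵀ = 1)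
    (hVk : Vkᵀ * Vk = 1) (hVbar : Vbarᵀ * Vbar = 1) (hVmix : Vkᵀ * Vbar = 0)
    (hA : A = Uk * Matrix.diagonal σ * Vkᵀ + Ubar * Sigb * Vbarᵀ)
    (Z : Matrix (Fin n) (Fin p) ℝ) (hZ : Z.rank = p) (hp : p ≤ A.rank)
    (hΩ : (Ukᵀ * Z).rank = k) :
    -- notation
    ∀ P Ak Ab T S,
      P = (1 : Matrix (Fin n) (Fin n) ℝ) - proj Z →
      Ak = Uk * Matrix.diagonal σ * Vkᵀ →
      Ab = Ubar * Sigb * Vbarᵀ →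
      T = (Ubarᵀ * Z) * pinvRow (Ukᵀ * Z) →
      S = sineMat T →
      (specNorm (P * A) ^ 2 - specNorm (P * Ab) ^ 2 ≤ specNorm (P * Ak) ^ 2 ∧
        specNorm (P * Ak) ^ 2 ≤
          min (specNorm S ^ 2 * specNorm (Matrix.diagonal σ) ^ 2)
            (specNorm (T * Matrix.diagonal σ) ^ 2)) ∧
      (froNorm (P * A) ^ 2 - froNorm (P * Ab) ^ 2 ≤ froNorm (P * Ak) ^ 2 ∧
        froNorm (P * Ak) ^ 2 ≤
          min (froNorm S ^ 2 * specNorm (Matrix.diagonal σ) ^ 2)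
            (froNorm (T * Matrix.diagonal σ) ^ 2)) :=
  deterministic_error_bounds_general A Uk Ubar Vk Vbar σ Sigb hUk hUfull hVk hVmix hA Z hZ hΩ
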